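/- Let a, b be real numbers with a > 0 and b > 0, and let n be a nonnegative integer. Then the (n+1)-st partial sum of the Gauss hypergeometric series ₂F₁(a,b;a+b+1;1) satisfies ∑_{k=0}^{n} (a)_k (b)_k / ((a+b+1)_k · k!) = (a+1)_n (b+1)_n / ((a+b+1)_n · n!). -/
import Mathlib


open scoped Nat

/-- Pochhammer symbol (rising factorial) `(x)_k` for a real number `x`. -/
noncomputable def poch (x : ℝ) (k : ℕ) : ℝ := (ascPochhammer ℝ k).eval x

lemma poch_zero (x : ℝ) : poch x 0 = 1 := by simp [poch]

lemma poch_succ (x : ℝ) (k : ℕ) : poch x (k + 1) = poch x k * (x + k) := by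
  simp [poch, ascPochhammer_succ_right]

lemma poch_succ_left (x : ℝ) (k : ℕ) : poch x (k + 1) = x * poch (x + 1) k := by
  simp [poch, ascPochhammer_succ_left, Polynomial.eval_comp]

lemma poch_pos {x : ℝ} (hx : 0 < x) (k : ℕ) : 0 < poch x k := by
  induction k with
  | zero => simp [poch_zero]
  | succ n ih =>
    rw [poch_succ]
    exact mul_pos ih (by positivity)

/-- The `(n+1)`-st partial sum of the Gauss series `₂F₁(a,b;a+b+1;1)` in closed form. -/
theorem truncated_gauss_closed_form (a b : ℝ) (ha : 0 < a) (hb : 0 < b) (n : ℕ) :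
    ∑ k ∈ Finset.range (n + 1), poch a k * poch b k / (poch (a + b + 1) k * (k)!) =
      poch (a + 1) n * poch (b + 1) n / (poch (a + b + 1) n * (n)!) := by
  induction n with
  | zero => simp [poch_zero]
  | succ n ih =>
    rw [Finset.sum_range_succ, ih]
    have hc : (0:ℝ) < a + b + 1 := by linarith
    have h1 : poch (a + b + 1) n ≠ 0 := (poch_pos hc n).ne'
    have h2 : poch (a + b + 1) (n + 1) ≠ 0 := (poch_pos hc (n + 1)).ne'
    have hf : ((n)! : ℝ) ≠ 0 := Nat.cast_ne_zero.mpr n.factorial_ne_zero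
    have hf2 : ((n + 1)! : ℝ) ≠ 0 := Nat.cast_ne_zero.mpr (n + 1).factorial_ne_zero
    rw [poch_succ (a+1), poch_succ (b+1), poch_succ (a+b+1),
      poch_succ_left a, poch_succ_left b]
    have hfac : ((n + 1)! : ℝ) = (n)! * (n + 1) := by
      rw [Nat.factorial_succ]; push_cast; ring
    rw [hfac]
    field_simp
    ring
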